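/- arXiv:1306.1194 — 2 statements merged into one kernel-verified Lean document; each statement's English description precedes it below -/
import Mathlib

section
/- Let Ω(r) = log(max(I(r),1)) where I = rD/H, and suppose for a.e. r in (a,b): −Ω'(r) ≤ C r^{γm−1} + C D(r)^{γ−1} D'(r) + C Σ(r) D'(r)/D(r)², with D nondecreasing, D(b) ≤ 1, Σ(r) ≤ C r^{m+2} and Σ'(r) ≥ 0, Σ(r)/D(r) bounded at both endpoints by C, and ∫ₐᵇ Σ'(r)/D(r) dr ≤ C. Then Ω(a) − Ω(b) ≤ C' for a constant C' depending only on C, γ, m. -/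
/-!
Since `Σ D'/D² = Σ'/D - (Σ/D)'`, the right-hand side of the bound on `-Ω'` is the derivative of
`g = C r^{γm}/(γm) + (C/γ) D^γ - C Σ/D` plus `C Σ'/D`. Integrating `-(Ω + g)' ≤ C Σ'/D` over
`[a, b]` bounds `Ω a - Ω b` by `g b - g a + C ∫ Σ'/D`, and every term on the right is controlled
by the hypotheses, provided `Σ b ≥ 0`. If `Σ b < 0`, then `Σ ≤ 0` on `[a, b]`, the last term of
the bound on `-Ω'` is nonpositive, and the same argument runs with `Σ` replaced by `0`.
-/

open MeasureTheory Set

theorem sub_le_integral_of_neg_deriv_le {f f' φ : ℝ → ℝ} {a b : ℝ} (hab : a ≤ b)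
    (hcont : ContinuousOn f (Icc a b)) (hderiv : ∀ r ∈ Ioo a b, HasDerivAt f (f' r) r)
    (hφ : IntegrableOn φ (Icc a b)) (hle : ∀ r ∈ Ioo a b, -f' r ≤ φ r) :
    f a - f b ≤ ∫ r in a..b, φ r := by
  have h := intervalIntegral.sub_le_integral_of_hasDeriv_right_of_le hab hcont.neg
    (fun r hr => (hderiv r hr).neg.hasDerivWithinAt) hφ hle
  simp only [Pi.neg_apply] at h
  linarith

theorem monotoneOn_Icc_of_hasDerivAt_nonneg {f f' : ℝ → ℝ} {a b : ℝ}
    (hf : ∀ r ∈ Icc a b, HasDerivAt f (f' r) r) (hf' : ∀ r ∈ Icc a b, 0 ≤ f' r) :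
    MonotoneOn f (Icc a b) :=
  monotoneOn_of_hasDerivWithinAt_nonneg (convex_Icc a b)
    (fun r hr => (hf r hr).continuousAt.continuousWithinAt)
    (fun r hr => (hf r (interior_subset hr)).hasDerivWithinAt)
    (fun r hr => hf' r (interior_subset hr))

theorem integrableOn_deriv_div_of_nonneg {S S' D : ℝ → ℝ} {a b : ℝ}
    (hS : ∀ r ∈ Icc a b, HasDerivAt S (S' r) r) (hS' : ∀ r ∈ Icc a b, 0 ≤ S' r)
    (hD : ContinuousOn D (Icc a b)) (hDpos : ∀ r ∈ Icc a b, 0 < D r) :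
    IntegrableOn (fun r => S' r / D r) (Icc a b) := by
  have hS'int : IntegrableOn S' (Icc a b) := by
    rw [integrableOn_Icc_iff_integrableOn_Ioc]
    exact intervalIntegral.integrableOn_deriv_of_nonneg
      (fun r hr => (hS r hr).continuousAt.continuousWithinAt)
      (fun r hr => hS r (Ioo_subset_Icc_self hr)) (fun r hr => hS' r (Ioo_subset_Icc_self hr))
  simpa only [div_eq_mul_inv] using hS'int.mul_continuousOn (g' := fun r => (D r)⁻¹)
    (hD.inv₀ fun r hr => (hDpos r hr).ne') isCompact_Icc

section FrequencyBound

variable {C γ p a b : ℝ} {D D' S S' : ℝ → ℝ}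

noncomputable def frequencyCorrection (C γ p : ℝ) (D S : ℝ → ℝ) (r : ℝ) : ℝ :=
  C * r ^ p / p + C / γ * D r ^ γ - C * (S r / D r)

theorem hasDerivAt_frequencyCorrection (hγ : γ ≠ 0) (hp : p ≠ 0) {r : ℝ} (hr : 0 < r)
    (hD : HasDerivAt D (D' r) r) (hDpos : 0 < D r) (hS : HasDerivAt S (S' r) r) :
    HasDerivAt (frequencyCorrection C γ p D S)
      (C * r ^ (p - 1) + C * D r ^ (γ - 1) * D' r + C * S r * D' r / D r ^ 2
        - C * (S' r / D r)) r := by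
  have h := ((Real.hasDerivAt_rpow_const (p := p) (Or.inl hr.ne')).const_mul C).div_const p
    |>.add ((hD.rpow_const (p := γ) (Or.inl hDpos.ne')).const_mul (C / γ))
    |>.sub ((hS.div hD hDpos.ne').const_mul C)
  refine h.congr_deriv ?_
  field_simp
  ring

theorem continuousOn_frequencyCorrection (hp : 0 ≤ p)
    (hD : ∀ r ∈ Icc a b, HasDerivAt D (D' r) r) (hDpos : ∀ r ∈ Icc a b, 0 < D r)
    (hS : ∀ r ∈ Icc a b, HasDerivAt S (S' r) r) :
    ContinuousOn (frequencyCorrection C γ p D S) (Icc a b) := by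
  intro r hr
  have hDr := (hD r hr).continuousAt
  have hDr0 := (hDpos r hr).ne'
  exact ((((Real.continuousAt_rpow_const r p (Or.inr hp)).const_mul C).div_const p).add
    ((hDr.rpow_const (Or.inl hDr0)).const_mul _)).sub
    (((hS r hr).continuousAt.div hDr hDr0).const_mul C) |>.continuousWithinAt

theorem frequencyCorrection_sub_le (hC : 0 ≤ C) (hγ : 0 < γ) (hp : 0 ≤ p) (ha : 0 ≤ a)
    (hDa : 0 < D a) (hDb : 0 < D b) (hDb1 : D b ≤ 1) (hSa : S a ≤ C * D a) (hSb : 0 ≤ S b) :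
    frequencyCorrection C γ p D S b - frequencyCorrection C γ p D S a
      ≤ C * b ^ p / p + C / γ + C * C := by
  have hap : 0 ≤ C * a ^ p / p := by have := Real.rpow_nonneg ha p; positivity
  have hDaγ : 0 ≤ C / γ * D a ^ γ := by have := Real.rpow_nonneg hDa.le γ; positivity
  have hDbγ : C / γ * D b ^ γ ≤ C / γ :=
    mul_le_of_le_one_right (by positivity) (Real.rpow_le_one hDb.le hDb1 hγ.le)
  have hSDa : C * (S a / D a) ≤ C * C :=
    mul_le_mul_of_nonneg_left ((div_le_iff₀ hDa).2 hSa) hC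
  have hSDb : 0 ≤ C * (S b / D b) := by positivity
  unfold frequencyCorrection
  linarith

theorem sub_le_of_neg_deriv_le_frequencyBound {Ω Ω' : ℝ → ℝ} (hC : 0 ≤ C) (hγ : 0 < γ)
    (hp : 0 < p) (ha : 0 ≤ a) (hab : a ≤ b)
    (hD : ∀ r ∈ Icc a b, HasDerivAt D (D' r) r) (hDpos : ∀ r ∈ Icc a b, 0 < D r) (hDb : D b ≤ 1)
    (hS : ∀ r ∈ Icc a b, HasDerivAt S (S' r) r) (hS' : ∀ r ∈ Icc a b, 0 ≤ S' r)
    (hSa : S a ≤ C * D a) (hSb : 0 ≤ S b) (hint : ∫ r in a..b, S' r / D r ≤ C)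
    (hΩ : ContinuousOn Ω (Icc a b)) (hΩ' : ∀ r ∈ Ioo a b, HasDerivAt Ω (Ω' r) r)
    (hbound : ∀ r ∈ Ioo a b,
      -Ω' r ≤ C * r ^ (p - 1) + C * D r ^ (γ - 1) * D' r + C * S r * D' r / D r ^ 2) :
    Ω a - Ω b ≤ C * b ^ p / p + C / γ + 2 * C * C := by
  have haI : a ∈ Icc a b := left_mem_Icc.2 hab
  have hbI : b ∈ Icc a b := right_mem_Icc.2 hab
  have hFTC := sub_le_integral_of_neg_deriv_le (f := Ω + frequencyCorrection C γ p D S)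
    (φ := fun r => C * (S' r / D r)) hab
    (hΩ.add (continuousOn_frequencyCorrection hp.le hD hDpos hS))
    (fun r hr => (hΩ' r hr).add <| hasDerivAt_frequencyCorrection hγ.ne' hp.ne'
      (ha.trans_lt hr.1) (hD r (Ioo_subset_Icc_self hr)) (hDpos r (Ioo_subset_Icc_self hr))
      (hS r (Ioo_subset_Icc_self hr)))
    ((integrableOn_deriv_div_of_nonneg hS hS'
      (fun r hr => (hD r hr).continuousAt.continuousWithinAt) hDpos).const_mul C)
    (fun r hr => by linarith [hbound r hr])
  have hint' : ∫ r in a..b, C * (S' r / D r) ≤ C * C := by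
    rw [intervalIntegral.integral_const_mul]
    exact mul_le_mul_of_nonneg_left hint hC
  have hcorr := frequencyCorrection_sub_le hC hγ hp.le ha (hDpos a haI) (hDpos b hbI) hDb hSa hSb
  simp only [Pi.add_apply] at hFTC
  linarith

end FrequencyBound

theorem stmt_6_general (C γ : ℝ) (m : ℕ) (hC : 0 < C) (hγ : 0 < γ) (hm : 1 ≤ m) :
    ∃ C' : ℝ, ∀ (a b : ℝ) (D D' Sig Sig' H Ω Ω' : ℝ → ℝ),
      0 < a → a < b → b ≤ 3 →
      (∀ r ∈ Icc a b, HasDerivAt D (D' r) r) →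
      (∀ r ∈ Icc a b, 0 ≤ D' r) →
      (∀ r ∈ Icc a b, 0 < D r) →
      D b ≤ 1 →
      (∀ r ∈ Icc a b, HasDerivAt Sig (Sig' r) r) →
      (∀ r ∈ Icc a b, 0 ≤ Sig' r) →
      (∀ r ∈ Icc a b, Sig r ≤ C * r ^ ((m : ℝ) + 2)) →
      Sig a ≤ C * D a → Sig b ≤ C * D b →
      (∫ r in a..b, Sig' r / D r) ≤ C →
      (∀ r ∈ Icc a b, 0 < H r) →
      (∀ r, Ω r = Real.log (max (r * D r / H r) 1)) →
      ContinuousOn Ω (Icc a b) →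
      (∀ r ∈ Ioo a b, HasDerivAt Ω (Ω' r) r) →
      (∀ r ∈ Ioo a b,
        -Ω' r ≤ C * r ^ (γ * (m : ℝ) - 1) + C * (D r) ^ (γ - 1) * D' r
                + C * Sig r * D' r / (D r)^2) →
      Ω a - Ω b ≤ C' := by
  have hp : 0 < γ * m := mul_pos hγ (by exact_mod_cast hm)
  refine ⟨C * 3 ^ (γ * m) / (γ * m) + C / γ + 2 * C * C, ?_⟩
  intro a b D D' Sig Sig' H Ω Ω' ha hab hb3 hD hD' hDpos hDb hSig hSig' _ hSa _ hint _ _ hΩ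
    hΩ' hbound
  have hb : C * b ^ (γ * m) / (γ * m) ≤ C * 3 ^ (γ * m) / (γ * m) := by
    gcongr
    linarith
  rcases le_or_gt 0 (Sig b) with hSb | hSb
  · linarith [sub_le_of_neg_deriv_le_frequencyBound hC.le hγ hp ha.le hab.le hD hDpos hDb hSig
      hSig' hSa hSb hint hΩ hΩ' hbound]
  · have hSig_term : ∀ r ∈ Ioo a b, C * Sig r * D' r / D r ^ 2 ≤ 0 := fun r hr => by
      have hSr : Sig r ≤ 0 := (monotoneOn_Icc_of_hasDerivAt_nonneg hSig hSig'
        (Ioo_subset_Icc_self hr) (right_mem_Icc.2 hab.le) hr.2.le).trans hSb.le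
      exact div_nonpos_of_nonpos_of_nonneg (mul_nonpos_of_nonpos_of_nonneg
        (mul_nonpos_of_nonneg_of_nonpos hC.le hSr) (hD' r (Ioo_subset_Icc_self hr))) (sq_nonneg _)
    have h := sub_le_of_neg_deriv_le_frequencyBound (S := fun _ => 0) (S' := fun _ => 0) hC.le hγ
      hp ha.le hab.le hD hDpos hDb (fun r _ => hasDerivAt_const r 0) (fun _ _ => le_rfl)
      (mul_nonneg hC.le (hDpos a (left_mem_Icc.2 hab.le)).le) le_rfl (by simpa using hC.le) hΩ
      hΩ' fun r hr => by
        simp only [mul_zero, zero_mul, zero_div, add_zero]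
        linarith [hbound r hr, hSig_term r hr]
    linarith

/-- Abstract form of the final integration in the main frequency estimate:
with `Ω = log (max (rD/H) 1)`, `-Ω' ≤ C r^{γm-1} + C D^{γ-1} D' + C Σ D'/D²`,
`D` nondecreasing with `D(b) ≤ 1`, `Σ(r) ≤ C r^{m+2}` nondecreasing, `Σ/D`
bounded by `C` at both endpoints and `∫ Σ'/D ≤ C`, one gets
`Ω(a) - Ω(b) ≤ C'` with `C'` depending only on `C, γ, m`. -/
theorem stmt_6 (C γ : ℝ) (m : ℕ) (hC : 0 < C) (hγ : 0 < γ) (hγ1 : γ ≤ 1) (hm : 1 ≤ m) :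
    ∃ C' : ℝ, ∀ (a b : ℝ) (D D' Sig Sig' H Ω Ω' : ℝ → ℝ),
      0 < a → a < b → b ≤ 3 →
      (∀ r ∈ Icc a b, HasDerivAt D (D' r) r) →
      (∀ r ∈ Icc a b, 0 ≤ D' r) →
      (∀ r ∈ Icc a b, 0 < D r) →
      D b ≤ 1 →
      (∀ r ∈ Icc a b, HasDerivAt Sig (Sig' r) r) →
      (∀ r ∈ Icc a b, 0 ≤ Sig' r) →
      (∀ r ∈ Icc a b, Sig r ≤ C * r ^ ((m : ℝ) + 2)) →
      Sig a ≤ C * D a → Sig b ≤ C * D b →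
      (∫ r in a..b, Sig' r / D r) ≤ C →
      (∀ r ∈ Icc a b, 0 < H r) →
      (∀ r, Ω r = Real.log (max (r * D r / H r) 1)) →
      ContinuousOn Ω (Icc a b) →
      (∀ r ∈ Ioo a b, HasDerivAt Ω (Ω' r) r) →
      (∀ r ∈ Ioo a b,
        -Ω' r ≤ C * r ^ (γ * (m : ℝ) - 1) + C * (D r) ^ (γ - 1) * D' r
                + C * Sig r * D' r / (D r)^2) →
      Ω a - Ω b ≤ C' :=
  stmt_6_general C γ m hC hγ hm
end

section
/- Let B ⊂ ℝᵐ be a bounded open convex set such that at every boundary point z ∈ ∂B there is an open ball of radius r/2 contained in B whose closure touches ∂B at z. Then for every point x ∈ ℝᵐ with dist(x,B) ≤ r and every ℓ ≤ r, there exists a ball of radius ℓ/4 contained in B at distance at least ℓ/4 from ∂B and at distance at most C(m)·ℓ + dist(x,B) from x, for a dimensional constant C(m). -/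
open Metric Bornology Set

/-- If a ball of radius `2s` around `y` is inside an open set `B`, then every point of the
ball of radius `s` is at distance at least `s` from the frontier. -/
lemma aux_depth {E : Type*} [NormedAddCommGroup E]
    {B : Set E} (hBo : IsOpen B) {y : E} {s : ℝ} (hs : 0 < s)
    (hsub : ball y (2*s) ⊆ B) (hfr : (frontier B).Nonempty) :
    ∀ p ∈ ball y s, s ≤ infDist p (frontier B) := by
  intro p hp
  by_contra h
  push_neg at h
  obtain ⟨q, hq, hdq⟩ := (infDist_lt_iff hfr).mp h
  have hqB : q ∉ B := (hBo.frontier_eq ▸ hq).2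
  apply hqB
  apply hsub
  rw [mem_ball] at hp ⊢
  calc dist q y ≤ dist q p + dist p y := dist_triangle q p y
    _ < s + s := by rw [dist_comm q p]; exact add_lt_add hdq hp
    _ = 2 * s := by ring

/-- Interior-ball placement in a convex set with the interior sphere condition:
for every `x` with `dist(x,B) ≤ r` and every `ℓ ≤ r` there is a ball of radius
`ℓ/4` inside `B`, at distance at least `ℓ/4` from `∂B` and at distance at most
`C(m) ℓ + dist(x,B)` from `x`. -/
theorem stmt_8 (m : ℕ) (hm : 1 ≤ m) :
    ∃ C : ℝ, 0 < C ∧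
    ∀ (B : Set (EuclideanSpace ℝ (Fin m))) (r : ℝ), 0 < r →
      IsOpen B → Convex ℝ B → Bornology.IsBounded B → B.Nonempty →
      (∀ z ∈ frontier B, ∃ y, Metric.ball y (r/2) ⊆ B ∧
        z ∈ closure (Metric.ball y (r/2))) →
      ∀ x : EuclideanSpace ℝ (Fin m), Metric.infDist x B ≤ r →
      ∀ ℓ : ℝ, 0 < ℓ → ℓ ≤ r →
      ∃ y, Metric.ball y (ℓ/4) ⊆ B ∧
        (∀ p ∈ Metric.ball y (ℓ/4), ℓ/4 ≤ Metric.infDist p (frontier B)) ∧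
        Metric.infDist x (Metric.ball y (ℓ/4)) ≤ C * ℓ + Metric.infDist x B := by
  haveI : Nonempty (Fin m) := ⟨⟨0, hm⟩⟩
  refine ⟨1, one_pos, ?_⟩
  intro B r hr hBo hBc hBb hBne hsphere x hxB ℓ hℓ hℓr
  -- frontier of B is nonempty
  have hfr : (frontier B).Nonempty := by
    by_contra h
    rw [Set.not_nonempty_iff_eq_empty] at h
    have hclopen : IsClopen B := isClopen_iff_frontier_eq_empty.mpr h
    rcases isClopen_iff.mp hclopen with h1 | h1
    · exact hBne.ne_empty h1
    · exact NormedSpace.unbounded_univ ℝ (EuclideanSpace ℝ (Fin m)) (h1 ▸ hBb)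
  -- key claim: given y with ball y (ℓ/2) ⊆ B, the conclusion conditions hold
  have key : ∀ y : EuclideanSpace ℝ (Fin m), ball y (ℓ/2) ⊆ B →
      ball y (ℓ/4) ⊆ B ∧ (∀ p ∈ ball y (ℓ/4), ℓ/4 ≤ infDist p (frontier B)) ∧
      infDist x (ball y (ℓ/4)) ≤ dist x y := by
    intro y hy
    have h2 : ball y (2*(ℓ/4)) ⊆ B := by
      rw [show 2*(ℓ/4) = ℓ/2 by ring]; exact hy
    refine ⟨(ball_subset_ball (by linarith)).trans hy,
      aux_depth hBo (by linarith) h2 hfr, ?_⟩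
    exact infDist_le_dist_of_mem (mem_ball_self (by linarith))
  -- pick nearest point b of closure B to x
  have hcc : IsCompact (closure B) := hBb.isCompact_closure
  obtain ⟨b, hb, hbd⟩ := hcc.exists_infDist_eq_dist hBne.closure x
  rw [infDist_closure] at hbd
  -- nearest frontier point to b
  have hfc : IsCompact (frontier B) := hcc.of_isClosed_subset isClosed_frontier
    (by rw [frontier_eq_closure_inter_closure]; exact Set.inter_subset_left)
  obtain ⟨z, hz, hzd⟩ := hfc.exists_infDist_eq_dist hfr b
  by_cases hcase : ℓ/2 ≤ dist b z
  · -- deep case : ball b (ℓ/2) ⊆ B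
    have hbB : b ∈ B := by
      rcases (closure_eq_interior_union_frontier (s := B)) ▸ hb with h | h
      · exact hBo.interior_eq ▸ h
      · exfalso
        have h0 : dist b z = 0 := by rw [← hzd]; exact infDist_zero_of_mem h
        linarith
    have hdisj : ball b (ℓ/2) ∩ frontier B = ∅ := by
      ext q; simp only [Set.mem_inter_iff, mem_ball, Set.mem_empty_iff_false, iff_false,
        not_and]
      intro hq hqf
      have h5 : infDist b (frontier B) ≤ dist b q := infDist_le_dist_of_mem hqf
      rw [hzd] at h5
      rw [dist_comm q b] at hq
      linarith
    have hsub : ball b (ℓ/2) ⊆ B := by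
      have hunion : ball b (ℓ/2) ⊆ B ∪ (closure B)ᶜ := by
        intro q hq
        by_contra h
        simp only [Set.mem_union, not_or, Set.mem_compl_iff, not_not] at h
        have : q ∈ frontier B := ⟨h.2, by rw [hBo.interior_eq]; exact h.1⟩
        exact (Set.eq_empty_iff_forall_notMem.mp hdisj q) ⟨hq, this⟩
      have hpre : IsPreconnected (ball b (ℓ/2)) := (convex_ball b (ℓ/2)).isPreconnected
      rcases hpre.subset_or_subset hBo (isClosed_closure.isOpen_compl)
          (Set.disjoint_left.mpr fun a ha hac => hac (subset_closure ha)) hunion with h | h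
      · exact h
      · exact absurd (h (mem_ball_self (by linarith))) (by simp [subset_closure hbB])
    obtain ⟨h1, h2, h3⟩ := key b hsub
    refine ⟨b, h1, h2, ?_⟩
    rw [← hbd] at h3
    have : (0:ℝ) ≤ ℓ := hℓ.le
    linarith
  · -- boundary case: use interior sphere condition at z
    push_neg at hcase
    obtain ⟨y₀, hy₀sub, hy₀cl⟩ := hsphere z hz
    have hzy₀ : dist z y₀ ≤ r/2 := by
      have : z ∈ closedBall y₀ (r/2) := by
        rwa [← closure_ball y₀ (by positivity : (r:ℝ)/2 ≠ 0)]
      rwa [mem_closedBall] at this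
    set t : ℝ := ℓ / r with ht
    have ht0 : 0 < t := by positivity
    have ht1 : t ≤ 1 := (div_le_one hr).mpr hℓr
    set y : EuclideanSpace ℝ (Fin m) := z + t • (y₀ - z) with hy
    have hyz : dist y z = t * dist y₀ z := by
      rw [hy, dist_eq_norm, add_sub_cancel_left, norm_smul, Real.norm_eq_abs,
        abs_of_pos ht0, dist_eq_norm]
    have hyy₀ : dist y y₀ = (1 - t) * dist z y₀ := by
      have : y - y₀ = (1 - t) • (z - y₀) := by
        rw [hy]; module
      rw [dist_eq_norm, this, norm_smul, Real.norm_eq_abs, abs_of_nonneg (by linarith),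
        dist_eq_norm]
    have hsub : ball y (ℓ/2) ⊆ B := by
      intro p hp
      apply hy₀sub
      rw [mem_ball] at hp ⊢
      have h1 : dist p y₀ ≤ dist p y + dist y y₀ := dist_triangle p y y₀
      have h2 : dist y y₀ ≤ (1 - t) * (r/2) := by
        rw [hyy₀]
        exact mul_le_mul_of_nonneg_left hzy₀ (by linarith)
      have h3 : (1 - t) * (r/2) = r/2 - ℓ/2 := by
        rw [ht]; field_simp
      linarith
    obtain ⟨h1, h2, h3⟩ := key y hsub
    refine ⟨y, h1, h2, ?_⟩
    have hxy : dist x y ≤ dist x b + dist b z + dist z y := dist_triangle4 x b z y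
    have hzy : dist z y ≤ ℓ/2 := by
      rw [dist_comm, hyz, dist_comm y₀ z]
      calc t * dist z y₀ ≤ t * (r/2) := mul_le_mul_of_nonneg_left hzy₀ ht0.le
        _ = ℓ/2 := by rw [ht]; field_simp
    rw [← hzd] at hcase
    rw [hzd] at hcase
    calc infDist x (ball y (ℓ/4)) ≤ dist x y := h3
      _ ≤ dist x b + dist b z + dist z y := hxy
      _ ≤ infDist x B + ℓ/2 + ℓ/2 := by
          rw [← hbd]; exact add_le_add (add_le_add le_rfl hcase.le) hzy
      _ ≤ 1 * ℓ + infDist x B := by linarith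
end
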